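/- arXiv:math/0306085 — 4 statements merged into one kernel-verified Lean document; each statement's English description precedes it below -/
import Mathlib

section
/- Let n ≥ 1 and let K₁ ⊆ K₂ be compact convex subsets of ℝⁿ with nonempty interior. Then the (n−1)-dimensional Hausdorff measure of the boundary of K₁ is at most that of the boundary of K₂: μH^{n−1}(∂K₁) ≤ μH^{n−1}(∂K₂). -/
open MeasureTheory Metric Set RealInnerProductSpace

set_option maxHeartbeats 1000000 in
/-- Monotonicity of surface area of convex bodies under inclusion
("Archimedes' axiom", case `i = 0`). -/
theorem surface_area_mono (n : ℕ) (hn : 1 ≤ n)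
    (K₁ K₂ : Set (EuclideanSpace ℝ (Fin n)))
    (hK₁c : IsCompact K₁) (hK₁conv : Convex ℝ K₁) (hK₁int : (interior K₁).Nonempty)
    (hK₂c : IsCompact K₂) (hK₂conv : Convex ℝ K₂) (hK₂int : (interior K₂).Nonempty)
    (hsub : K₁ ⊆ K₂) :
    μH[(n : ℝ) - 1] (frontier K₁) ≤ μH[(n : ℝ) - 1] (frontier K₂) := by
  classical
  have hK₁ne : K₁.Nonempty := hK₁int.mono interior_subset
  have hcomp : IsComplete K₁ := hK₁c.isClosed.isComplete
  -- metric projection onto K₁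
  choose P hPmem hPnorm using fun u : EuclideanSpace ℝ (Fin n) =>
    exists_norm_eq_iInf_of_complete_convex hK₁ne hcomp hK₁conv u
  have hPkey : ∀ u : EuclideanSpace ℝ (Fin n), ∀ w ∈ K₁, ⟪u - P u, w - P u⟫ ≤ 0 := fun u =>
    (norm_eq_iInf_iff_real_inner_le_zero hK₁conv (hPmem u)).1 (hPnorm u)
  -- 1-Lipschitz
  have hPlip : LipschitzWith 1 P := by
    apply LipschitzWith.of_dist_le_mul
    intro x y
    rw [NNReal.coe_one, one_mul, dist_eq_norm, dist_eq_norm]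
    have h1 := hPkey x (P y) (hPmem y)
    have h2 := hPkey y (P x) (hPmem x)
    have key : ‖P y - P x‖ ^ 2 ≤ ⟪y - x, P y - P x⟫ := by
      have e : ⟪y - x, P y - P x⟫ - ‖P y - P x‖ ^ 2 =
          ⟪y - P y, P y - P x⟫ - ⟪x - P x, P y - P x⟫ := by
        rw [← real_inner_self_eq_norm_sq, ← inner_sub_left, ← inner_sub_left]
        congr 1
        abel
      have h2' : (0 : ℝ) ≤ ⟪y - P y, P y - P x⟫ := by
        have e2 : ⟪y - P y, P y - P x⟫ = -⟪y - P y, P x - P y⟫ := by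
          rw [← inner_neg_right]; congr 1; abel
        rw [e2]; linarith
      linarith
    have cs : ⟪y - x, P y - P x⟫ ≤ ‖y - x‖ * ‖P y - P x‖ := real_inner_le_norm _ _
    have hxy : ‖x - y‖ = ‖y - x‖ := norm_sub_rev _ _
    have hpq : ‖P x - P y‖ = ‖P y - P x‖ := norm_sub_rev _ _
    rw [hxy, hpq]
    nlinarith [norm_nonneg (P y - P x), norm_nonneg (y - x)]
  -- projection maps frontier K₂ onto frontier K₁
  have himg : frontier K₁ ⊆ P '' frontier K₂ := by
    intro y hy
    have hyK₁ : y ∈ K₁ := by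
      rw [hK₁c.isClosed.frontier_eq] at hy; exact hy.1
    have hyint : y ∉ interior K₁ := by
      rw [hK₁c.isClosed.frontier_eq] at hy; exact hy.2
    -- supporting functional at y
    obtain ⟨f, hf⟩ := geometric_hahn_banach_open_point (hK₁conv.interior) isOpen_interior hyint
    set v := (InnerProductSpace.toDual ℝ (EuclideanSpace ℝ (Fin n))).symm f with hv
    have hinner : ∀ w : EuclideanSpace ℝ (Fin n), ⟪v, w⟫ = f w := fun w =>
      InnerProductSpace.toDual_symm_apply
    have hvne : v ≠ 0 := by
      obtain ⟨a, ha⟩ := hK₁int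
      intro h0
      have h1 : f a < f y := hf a ha
      have h2 : f a = 0 := by rw [← hinner, h0, inner_zero_left]
      have h3 : f y = 0 := by rw [← hinner, h0, inner_zero_left]
      rw [h2, h3] at h1; exact lt_irrefl 0 h1
    -- f w ≤ f y on all of K₁
    have hfle : ∀ w ∈ K₁, f w ≤ f y := by
      intro w hw
      obtain ⟨a, ha⟩ := hK₁int
      have hay : f a < f y := hf a ha
      by_contra hlt
      push_neg at hlt
      have hden : (0 : ℝ) < f w - f a := by linarith
      set t : ℝ := (f w - f y) / (f w - f a) with htdef
      have ht0 : 0 < t := div_pos (by linarith) hden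
      have ht1 : t < 1 := (div_lt_one hden).2 (by linarith)
      have hmem : t • a + (1 - t) • w ∈ interior K₁ :=
        hK₁conv.combo_interior_self_mem_interior ha hw ht0 (by linarith) (by ring)
      have hlt2 := hf _ hmem
      have hval : f (t • a + (1 - t) • w) = t * f a + (1 - t) * f w := by
        rw [map_add, f.map_smul, f.map_smul, smul_eq_mul, smul_eq_mul]
      have heq : t * (f w - f a) = f w - f y := by
        rw [htdef]; field_simp
      rw [hval] at hlt2
      nlinarith
    -- ray from y in direction v
    set S : Set ℝ := {t : ℝ | y + t • v ∈ K₂} with hS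
    have h0S : (0 : ℝ) ∈ S := by
      simp only [hS, mem_setOf_eq, zero_smul, add_zero]
      exact hsub hyK₁
    obtain ⟨R, hR⟩ := hK₂c.isBounded.subset_closedBall 0
    have hvpos : 0 < ‖v‖ := norm_pos_iff.mpr hvne
    have hbdd : BddAbove S := by
      refine ⟨(R + ‖y‖) / ‖v‖, fun t ht => ?_⟩
      have h1 : ‖y + t • v‖ ≤ R := by
        have := hR ht
        rwa [mem_closedBall, dist_zero_right] at this
      have h2 : ‖t • v‖ ≤ ‖y + t • v‖ + ‖y‖ := by
        calc ‖t • v‖ = ‖(y + t • v) - y‖ := by congr 1; abel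
          _ ≤ ‖y + t • v‖ + ‖y‖ := norm_sub_le _ _
      have h3 : |t| * ‖v‖ ≤ R + ‖y‖ := by
        rw [← Real.norm_eq_abs, ← norm_smul]
        linarith
      rw [le_div_iff₀ hvpos]
      calc t * ‖v‖ ≤ |t| * ‖v‖ :=
            mul_le_mul_of_nonneg_right (le_abs_self t) (norm_nonneg v)
        _ ≤ R + ‖y‖ := h3
    have hSclosed : IsClosed S := by
      have hc : Continuous fun t : ℝ => y + t • v :=
        continuous_const.add (continuous_id.smul continuous_const)
      exact hK₂c.isClosed.preimage hc
    set T : ℝ := sSup S with hT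
    have hTS : T ∈ S := hSclosed.csSup_mem ⟨0, h0S⟩ hbdd
    have hT0 : 0 ≤ T := le_csSup hbdd h0S
    set x := y + T • v with hx
    have hxK₂ : x ∈ K₂ := hTS
    have hxfr : x ∈ frontier K₂ := by
      rw [hK₂c.isClosed.frontier_eq]
      refine ⟨hxK₂, fun hxint => ?_⟩
      obtain ⟨ε, hε, hball⟩ := Metric.mem_nhds_iff.1 (mem_interior_iff_mem_nhds.1 hxint)
      set t' : ℝ := T + ε / (2 * ‖v‖) with ht'
      have ht'S : t' ∈ S := by
        apply hball
        rw [mem_ball]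
        have he : y + t' • v - x = (ε / (2 * ‖v‖)) • v := by
          rw [hx, ht', add_smul]; abel
        rw [dist_eq_norm, he, norm_smul, Real.norm_eq_abs,
          abs_of_nonneg (by positivity)]
        rw [div_mul_eq_mul_div, mul_comm 2 ‖v‖, ← div_div, mul_div_assoc,
          div_self (ne_of_gt hvpos), mul_one]
        linarith
      have hle : t' ≤ T := le_csSup hbdd ht'S
      have h1 : ε / (2 * ‖v‖) ≤ 0 := by linarith [ht' ▸ hle]
      have h2 : 0 < ε / (2 * ‖v‖) := by positivity
      linarith
    refine ⟨x, hxfr, ?_⟩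
    -- P x = y since y satisfies the variational inequality
    have hray : ∀ w ∈ K₁, ⟪x - y, w - y⟫ ≤ 0 := by
      intro w hw
      have he : x - y = T • v := by rw [hx]; abel
      rw [he, real_inner_smul_left]
      have he2 : ⟪v, w - y⟫ = f w - f y := by rw [hinner, map_sub]
      rw [he2]
      have := hfle w hw
      nlinarith
    have h1 := hPkey x y hyK₁
    have h2 := hray (P x) (hPmem x)
    have hsq : ‖y - P x‖ ^ 2 ≤ 0 := by
      have e : ‖y - P x‖ ^ 2 = ⟪x - P x, y - P x⟫ - ⟪x - y, y - P x⟫ := by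
        rw [← real_inner_self_eq_norm_sq, ← inner_sub_left]
        congr 1
        abel
      have h2' : (0 : ℝ) ≤ ⟪x - y, y - P x⟫ → True := fun _ => trivial
      have e2 : ⟪x - y, y - P x⟫ = -⟪x - y, P x - y⟫ := by
        rw [← inner_neg_right]; congr 1; abel
      rw [e, e2]
      linarith
    have hz : y - P x = 0 :=
      norm_eq_zero.1 (le_antisymm (by nlinarith [norm_nonneg (y - P x)]) (norm_nonneg _))
    exact (sub_eq_zero.1 hz).symm
  -- conclude via Lipschitz image bound
  have hd : (0 : ℝ) ≤ (n : ℝ) - 1 := by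
    have h1 : (1 : ℝ) ≤ (n : ℝ) := by exact_mod_cast hn
    linarith
  calc μH[(n : ℝ) - 1] (frontier K₁) ≤ μH[(n : ℝ) - 1] (P '' frontier K₂) :=
        measure_mono himg
    _ ≤ ((1 : NNReal) : ENNReal) ^ ((n : ℝ) - 1) * μH[(n : ℝ) - 1] (frontier K₂) :=
        hPlip.hausdorffMeasure_image_le hd _
    _ = μH[(n : ℝ) - 1] (frontier K₂) := by
        simp
end

section
/- Let n ≥ 1, let a₁, …, aₙ > 0, let E = {x ∈ ℝⁿ : Σᵢ xᵢ²/aᵢ² ≤ 1}, and let ρ ≥ 0. Then the volume of the ρ-neighborhood E_ρ = {x ∈ ℝⁿ : dist(x, E) ≤ ρ} satisfies vol(E_ρ) ≥ (2/√n)ⁿ · ∏ᵢ (aᵢ + ρ). -/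
/-!
The ellipsoid with semi-axes `aᵢ + ρ` lies in the `ρ`-neighbourhood of the ellipsoid with
semi-axes `aᵢ`: the point `yᵢ = aᵢ xᵢ / (aᵢ + ρ)` lies in the smaller ellipsoid and
`|x - y|² = ρ² ∑ xᵢ² / (aᵢ + ρ)² ≤ ρ²`. The larger ellipsoid in turn contains the box with
half-sides `(aᵢ + ρ) / √n`, whose volume is the claimed bound.
-/

open MeasureTheory

namespace EuclideanSpace

variable {ι : Type*} [Fintype ι]

def ellipsoid (a : ι → ℝ) : Set (EuclideanSpace ℝ ι) :=
  {y | ∑ i, y i ^ 2 / a i ^ 2 ≤ 1}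

theorem ellipsoid_add_const_subset_infDist_le {a : ι → ℝ} (ha : ∀ i, 0 < a i) {ρ : ℝ}
    (hρ : 0 ≤ ρ) :
    ellipsoid (fun i => a i + ρ) ⊆ {x | Metric.infDist x (ellipsoid a) ≤ ρ} := by
  intro x hx
  have haρ : ∀ i, a i + ρ ≠ 0 := fun i => by linarith [ha i]
  set y : EuclideanSpace ℝ ι := WithLp.toLp 2 fun i => a i / (a i + ρ) * x i
  have hy : y ∈ ellipsoid a := by
    have hsum : ∑ i, y i ^ 2 / a i ^ 2 = ∑ i, x i ^ 2 / (a i + ρ) ^ 2 :=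
      Finset.sum_congr rfl fun i _ => by
        simp only [y]
        field_simp [(ha i).ne', haρ i]
    exact hsum.trans_le hx
  have hdist_sq : ∑ i, (x i - y i) ^ 2 ≤ ρ ^ 2 := calc
    ∑ i, (x i - y i) ^ 2 = ρ ^ 2 * ∑ i, x i ^ 2 / (a i + ρ) ^ 2 := by
      rw [Finset.mul_sum]
      refine Finset.sum_congr rfl fun i _ => ?_
      simp only [y]
      field_simp [haρ i]
      ring
    _ ≤ ρ ^ 2 * 1 := mul_le_mul_of_nonneg_left hx (sq_nonneg ρ)
    _ = ρ ^ 2 := mul_one _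
  have hdist : dist x y ≤ ρ := by
    rw [EuclideanSpace.dist_eq]
    simp_rw [Real.dist_eq, sq_abs]
    exact (Real.sqrt_le_sqrt hdist_sq).trans_eq (Real.sqrt_sq hρ)
  exact (Metric.infDist_le_dist_of_mem hy).trans hdist

theorem box_subset_ellipsoid {b : ι → ℝ} (hb : ∀ i, 0 < b i) :
    {x : EuclideanSpace ℝ ι | ∀ i, |x i| ≤ b i / √(Fintype.card ι)} ⊆ ellipsoid b := by
  intro x hx
  have hterm : ∀ i, x i ^ 2 / b i ^ 2 ≤ 1 / Fintype.card ι := fun i => by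
    have hsq : x i ^ 2 ≤ b i ^ 2 / Fintype.card ι := by
      rw [← sq_abs, ← Real.sq_sqrt (Nat.cast_nonneg (Fintype.card ι)), ← div_pow]
      exact pow_le_pow_left₀ (abs_nonneg _) (hx i) 2
    rwa [div_le_iff₀ (pow_pos (hb i) 2), one_div_mul_eq_div]
  calc ∑ i, x i ^ 2 / b i ^ 2 ≤ ∑ _i : ι, 1 / (Fintype.card ι : ℝ) :=
        Finset.sum_le_sum fun i _ => hterm i
    _ ≤ 1 := by
        rw [Finset.sum_const, Finset.card_univ, nsmul_eq_mul, mul_one_div]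
        exact div_self_le_one _

theorem volume_setOf_forall_abs_le (c : ι → ℝ) (hc : ∀ i, 0 ≤ c i) :
    volume {x : EuclideanSpace ℝ ι | ∀ i, |x i| ≤ c i} = ENNReal.ofReal (∏ i, 2 * c i) := by
  have hbox : {x : EuclideanSpace ℝ ι | ∀ i, |x i| ≤ c i} =
      (MeasurableEquiv.toLp 2 (ι → ℝ)).symm ⁻¹' Set.univ.pi fun i => Set.Icc (-c i) (c i) := by
    ext x
    simp only [Set.mem_ofPred_eq, Set.mem_preimage, Set.mem_univ_pi, Set.mem_Icc, abs_le]
    rfl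
  rw [hbox, (volume_preserving_symm_measurableEquiv_toLp ι).measure_preimage
      (MeasurableSet.univ_pi fun _ => measurableSet_Icc).nullMeasurableSet,
    volume_pi_pi, ENNReal.ofReal_prod_of_nonneg fun i _ => by linarith [hc i]]
  refine Finset.prod_congr rfl fun i _ => ?_
  rw [Real.volume_Icc]
  ring_nf

end EuclideanSpace

open EuclideanSpace in
theorem ellipsoid_neighborhood_volume_lower_general (n : ℕ)
    (a : Fin n → ℝ) (ha : ∀ i, 0 < a i) (ρ : ℝ) (hρ : 0 ≤ ρ) :
    ENNReal.ofReal ((2 / Real.sqrt n) ^ n * ∏ i, (a i + ρ))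
      ≤ volume {x : EuclideanSpace ℝ (Fin n) |
          Metric.infDist x {y : EuclideanSpace ℝ (Fin n) | ∑ i, (y i) ^ 2 / (a i) ^ 2 ≤ 1} ≤ ρ} := by
  have haρ : ∀ i, 0 < a i + ρ := fun i => by linarith [ha i]
  have hvol := volume_setOf_forall_abs_le (fun i => (a i + ρ) / √n) fun i =>
    div_nonneg (haρ i).le (Real.sqrt_nonneg _)
  have hprod : ∏ i, 2 * ((a i + ρ) / √n) = (2 / √n) ^ n * ∏ i, (a i + ρ) := calc
    ∏ i, 2 * ((a i + ρ) / √n) = ∏ i, (a i + ρ) * (2 / √n) :=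
      Finset.prod_congr rfl fun i _ => by ring
    _ = (2 / √n) ^ n * ∏ i, (a i + ρ) := by
      rw [← Finset.prod_mul_pow_card, Finset.card_univ, Fintype.card_fin, mul_comm]
  have hbox : {x : EuclideanSpace ℝ (Fin n) | ∀ i, |x i| ≤ (a i + ρ) / √n} ⊆
      ellipsoid fun i => a i + ρ := by
    simpa using box_subset_ellipsoid haρ
  rw [← hprod, ← hvol]
  exact measure_mono (hbox.trans (ellipsoid_add_const_subset_infDist_le ha hρ))

/-- Lower bound for the volume of the closed `ρ`-neighborhood of an ellipsoid:
`vol(E_ρ) ≥ (2/√n)^n ∏ i, (a i + ρ)`. -/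
theorem ellipsoid_neighborhood_volume_lower (n : ℕ) (hn : 1 ≤ n)
    (a : Fin n → ℝ) (ha : ∀ i, 0 < a i) (ρ : ℝ) (hρ : 0 ≤ ρ) :
    ENNReal.ofReal ((2 / Real.sqrt n) ^ n * ∏ i, (a i + ρ))
      ≤ volume {x : EuclideanSpace ℝ (Fin n) |
          Metric.infDist x {y : EuclideanSpace ℝ (Fin n) | ∑ i, (y i) ^ 2 / (a i) ^ 2 ≤ 1} ≤ ρ} :=
  ellipsoid_neighborhood_volume_lower_general n a ha ρ hρ
end

section
/- Let n ≥ 1, let l₁, …, lₙ > 0, let P = ∏ᵢ [0, lᵢ] ⊆ ℝⁿ, and let ρ ≥ 0. Then vol(P_ρ) = Σ_{k=0}^{n} κ_k · s_{n−k}(l₁, …, lₙ) · ρ^k, where κ_k is the volume of the unit ball in ℝ^k (with κ₀ = 1) and P_ρ = {x : dist(x, P) ≤ ρ}. -/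
/-!
Let `c(x)` be the coordinatewise nearest point of the box to `x`. Then `dist(x, P) = ‖x - c(x)‖`,
so `P_ρ` is the preimage of the ball of radius `ρ` under the coordinatewise map `t ↦ t - c(t)`.
In each coordinate this map collapses `[0, lᵢ]` to `0` and translates the two outer half-lines
onto `(-∞, 0)` and `(0, ∞)`, so it pushes Lebesgue measure forward to `λ + lᵢ δ₀`. Hence
`vol(P_ρ)` is the mass of the ball under `∏ᵢ (λ + lᵢ δ₀)`. Expanding the product, the term in
which the coordinates of `T` carry `λ` and the others `lᵢ δ₀` is `∏_{i ∉ T} lᵢ` times the volume of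
the `|T|`-dimensional ball of radius `ρ`.
-/

open MeasureTheory Measure Set Metric
open scoped NNReal ENNReal

def overshoot (l t : ℝ) : ℝ := t - max 0 (min l t)

lemma continuous_overshoot (l : ℝ) : Continuous (overshoot l) := by
  unfold overshoot; fun_prop

lemma abs_overshoot_le {l t y : ℝ} (hy : y ∈ Icc 0 l) : |overshoot l t| ≤ |t - y| := by
  obtain ⟨hy0, hyl⟩ := hy
  unfold overshoot
  rcases le_total t 0 with ht | ht
  · rw [min_eq_right (ht.trans (hy0.trans hyl)), max_eq_left ht, abs_of_nonpos (by linarith),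
      abs_of_nonpos (by linarith)]
    linarith
  rcases le_total t l with htl | htl
  · rw [min_eq_right htl, max_eq_right ht, sub_self, abs_zero]
    exact abs_nonneg _
  · rw [min_eq_left htl, max_eq_right (hy0.trans hyl), abs_of_nonneg (by linarith),
      abs_of_nonneg (by linarith)]
    linarith

lemma volume_eq_restrict_Iio_add_Icc_add_Ioi {l : ℝ} (hl : 0 ≤ l) :
    (volume : Measure ℝ) =
      volume.restrict (Iio 0) + volume.restrict (Icc 0 l) + volume.restrict (Ioi l) := by
  rw [← restrict_union ((Iio_disjoint_Ici le_rfl).mono_right Icc_subset_Ici_self)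
    measurableSet_Icc, Iio_union_Icc_eq_Iic hl, ← compl_Iic,
    restrict_add_restrict_compl measurableSet_Iic]

lemma map_overshoot_volume {l : ℝ} (hl : 0 ≤ l) :
    volume.map (overshoot l) = volume + l.toNNReal • dirac 0 := by
  have hmeas := (continuous_overshoot l).measurable
  have hneg : (volume.restrict (Iio 0)).map (overshoot l) = volume.restrict (Iio 0) := by
    rw [map_congr (g := id), map_id]
    filter_upwards [ae_restrict_mem measurableSet_Iio] with t (ht : t < 0)
    simp [overshoot, min_eq_right (ht.le.trans hl), ht.le]
  have hmid : (volume.restrict (Icc 0 l)).map (overshoot l) = l.toNNReal • dirac 0 := by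
    rw [map_congr (g := fun _ => 0), Measure.map_const, restrict_apply_univ, Real.volume_Icc,
      sub_zero]
    · rfl
    filter_upwards [ae_restrict_mem measurableSet_Icc] with t ⟨ht0, htl⟩
    simp [overshoot, min_eq_right htl, ht0]
  have hpos : (volume.restrict (Ioi l)).map (overshoot l) = volume.restrict (Ioi 0) := by
    have hshift : (volume.restrict (Ioi l)).map (overshoot l) =
        (volume.restrict (Ioi l)).map (· - l) := by
      refine map_congr ?_
      filter_upwards [ae_restrict_mem measurableSet_Ioi] with t (ht : l < t)
      simp [overshoot, min_eq_left ht.le, hl]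
    have hpre : (· - l) ⁻¹' Ioi 0 = Ioi l := by ext; simp
    rw [hshift, ← hpre, ← (measurableEmbedding_subRight l).restrict_map, map_sub_right_eq_self]
  conv_lhs => rw [volume_eq_restrict_Iio_add_Icc_add_Ioi hl]
  rw [Measure.map_add _ _ hmeas, Measure.map_add _ _ hmeas, hneg, hmid, hpos, add_right_comm,
    restrict_congr_set Iio_ae_eq_Iic, ← compl_Iic, restrict_add_restrict_compl measurableSet_Iic]

namespace MeasureTheory.Measure

variable {ι : Type*} [Fintype ι] {α : ι → Type*} [∀ i, MeasurableSpace (α i)]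

lemma pi_dirac (x : ∀ i, α i) : Measure.pi (fun i => dirac (x i)) = dirac x := by
  refine pi_eq fun s hs => ?_
  by_cases hx : x ∈ univ.pi s
  · rw [dirac_apply_of_mem hx, Finset.prod_eq_one fun i _ => dirac_apply_of_mem (hx i trivial)]
  · obtain ⟨i, hi⟩ : ∃ i, x i ∉ s i := by simpa using hx
    rw [dirac_apply' _ (.univ_pi hs), indicator_of_notMem hx,
      Finset.prod_eq_zero (Finset.mem_univ i)]
    rw [dirac_apply' _ (hs i), indicator_of_notMem hi]

lemma pi_ite_dirac (μ : ∀ i, Measure (α i)) [∀ i, SigmaFinite (μ i)] (p : ι → Prop)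
    [DecidablePred p] (x : ∀ i, α i) :
    Measure.pi (fun i => if p i then μ i else dirac (x i)) =
      (Measure.pi fun i : Subtype p => μ i).map
        fun v i => if h : p i then v ⟨i, h⟩ else x i := by
  have (i : ι) : SigmaFinite (if p i then μ i else dirac (x i)) := by
    split_ifs <;> infer_instance
  set e := MeasurableEquiv.piEquivPiSubtypeProd α p
  have hp : (Measure.pi fun i : Subtype p => if p i then μ i else dirac (x i)) =
      Measure.pi fun i : Subtype p => μ i := by
    congr 1; funext i; exact if_pos i.2
  have hnp : (Measure.pi fun i : {i // ¬ p i} => if p i then μ i else dirac (x i)) =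
      dirac fun i : {i // ¬ p i} => x i := by
    rw [← pi_dirac]; congr 1; funext i; exact if_neg i.2
  rw [← ((measurePreserving_piEquivPiSubtypeProd _ p).symm e).map_eq, hp, hnp,
    prod_dirac, map_map e.symm.measurable measurable_prodMk_right]
  rfl

lemma pi_add_smul [DecidableEq ι] (μ ν : ∀ i, Measure (α i)) [∀ i, SigmaFinite (μ i)]
    [∀ i, SigmaFinite (ν i)] (c : ι → ℝ≥0) :
    Measure.pi (fun i => μ i + c i • ν i) =
      ∑ T : Finset ι, (∏ i ∈ Tᶜ, (c i : ℝ≥0∞)) •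
        Measure.pi (fun i => if i ∈ T then μ i else ν i) := by
  have (T : Finset ι) (i : ι) : SigmaFinite (if i ∈ T then μ i else ν i) := by
    split_ifs <;> infer_instance
  refine pi_eq fun s _ => ?_
  simp only [Measure.coe_finsetSum, Finset.sum_apply, Measure.smul_apply, pi_pi, apply_ite,
    ite_apply, Measure.add_apply, smul_eq_mul, ENNReal.smul_def]
  rw [Finset.prod_add, ← Finset.powerset_univ]
  refine Finset.sum_congr rfl fun T _ => ?_
  rw [Finset.prod_ite, Finset.prod_mul_distrib, Finset.filter_mem_eq_inter, Finset.univ_inter,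
    Finset.filter_notMem_eq_sdiff, Finset.compl_eq_univ_sdiff]
  ring

end MeasureTheory.Measure

lemma volume_closedBall_euclideanSpace {κ : Type*} [Fintype κ] {k : ℕ}
    (hk : Fintype.card κ = k) {ρ : ℝ} (hρ : 0 ≤ ρ) :
    volume (closedBall (0 : EuclideanSpace ℝ κ) ρ) =
      ENNReal.ofReal (ρ ^ k) * volume (closedBall (0 : EuclideanSpace ℝ (Fin k)) 1) := by
  let f := LinearIsometryEquiv.piLpCongrLeft 2 ℝ ℝ (Fintype.equivFinOfCardEq hk)
  rw [addHaar_closedBall' _ _ hρ, finrank_euclideanSpace, hk,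
    ← f.measurePreserving.measure_preimage measurableSet_closedBall.nullMeasurableSet,
    f.preimage_closedBall, map_zero]

section Euclidean

variable {ι : Type*} [Fintype ι]

lemma norm_toLp_extend_zero (p : ι → Prop) [DecidablePred p] (v : Subtype p → ℝ) :
    ‖WithLp.toLp 2 (fun i => if h : p i then v ⟨i, h⟩ else 0)‖ = ‖WithLp.toLp 2 v‖ := by
  simp only [EuclideanSpace.norm_eq, Real.norm_eq_abs, sq_abs]
  rw [← Fintype.sum_subtype_add_sum_subtype p]
  congr 1
  rw [Fintype.sum_eq_zero _ fun i : {i // ¬ p i} => by rw [dif_neg i.2, sq, zero_mul], add_zero]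
  exact Fintype.sum_congr _ _ fun i => by rw [dif_pos i.2]

lemma infDist_box_eq_norm_overshoot {l : ι → ℝ} (hl : ∀ i, 0 ≤ l i)
    (x : EuclideanSpace ℝ ι) :
    infDist x {y : EuclideanSpace ℝ ι | ∀ i, 0 ≤ y i ∧ y i ≤ l i} =
      ‖WithLp.toLp 2 fun i => overshoot (l i) (x i)‖ := by
  set c : EuclideanSpace ℝ ι := WithLp.toLp 2 fun i => max 0 (min (l i) (x i))
  have hc : c ∈ {y : EuclideanSpace ℝ ι | ∀ i, 0 ≤ y i ∧ y i ≤ l i} :=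
    fun i => ⟨le_max_left _ _, max_le (hl i) (min_le_left _ _)⟩
  have hdist : dist x c = ‖WithLp.toLp 2 fun i => overshoot (l i) (x i)‖ := by
    rw [dist_eq_norm]; rfl
  refine le_antisymm (hdist ▸ infDist_le_dist_of_mem hc) ((le_infDist ⟨c, hc⟩).mpr fun y hy => ?_)
  rw [← hdist, EuclideanSpace.dist_eq, EuclideanSpace.dist_eq]
  gcongr with i
  rw [Real.dist_eq, Real.dist_eq]
  exact abs_overshoot_le (hy i)

lemma pi_volume_ite_dirac_zero_closedBall (p : ι → Prop) [DecidablePred p] {k : ℕ}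
    (hk : Fintype.card (Subtype p) = k) {ρ : ℝ} (hρ : 0 ≤ ρ) :
    Measure.pi (fun i => if p i then (volume : Measure ℝ) else dirac 0)
        (WithLp.toLp 2 ⁻¹' closedBall 0 ρ) =
      ENNReal.ofReal (ρ ^ k) * volume (closedBall (0 : EuclideanSpace ℝ (Fin k)) 1) := by
  have hext : Measurable fun (v : Subtype p → ℝ) (i : ι) => if h : p i then v ⟨i, h⟩ else 0 := by
    refine measurable_pi_lambda _ fun i => ?_
    split_ifs <;> fun_prop
  rw [← volume_closedBall_euclideanSpace hk hρ, Measure.pi_ite_dirac, map_apply hext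
    (measurableSet_closedBall.preimage (PiLp.continuous_toLp 2 _).measurable),
    ← (PiLp.volume_preserving_toLp (Subtype p)).measure_preimage
      measurableSet_closedBall.nullMeasurableSet]
  congr 1
  ext v
  simp only [mem_preimage, mem_closedBall_zero_iff, norm_toLp_extend_zero]

lemma map_pi_overshoot_volume {l : ι → ℝ} (hl : ∀ i, 0 ≤ l i) :
    (volume : Measure (ι → ℝ)).map (fun y i => overshoot (l i) (y i)) =
      Measure.pi fun i => volume + (l i).toNNReal • dirac 0 := by
  have (i : ι) : SigmaFinite ((volume : Measure ℝ).map (overshoot (l i))) := by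
    rw [map_overshoot_volume (hl i)]; infer_instance
  rw [volume_pi, pi_map_pi fun i => (continuous_overshoot _).aemeasurable]
  simp only [map_overshoot_volume (hl _)]

lemma volume_setOf_norm_overshoot_le [DecidableEq ι] {l : ι → ℝ} (hl : ∀ i, 0 ≤ l i) {ρ : ℝ}
    (hρ : 0 ≤ ρ) :
    volume {x : EuclideanSpace ℝ ι | ‖WithLp.toLp 2 fun i => overshoot (l i) (x i)‖ ≤ ρ} =
      ∑ T : Finset ι, (∏ i ∈ Tᶜ, ENNReal.ofReal (l i)) *
        (ENNReal.ofReal (ρ ^ T.card) *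
          volume (closedBall (0 : EuclideanSpace ℝ (Fin T.card)) 1)) := by
  set Φ : (ι → ℝ) → ι → ℝ := fun y i => overshoot (l i) (y i)
  have hΦ : Measurable Φ :=
    measurable_pi_lambda _ fun i => (continuous_overshoot _).measurable.comp (measurable_pi_apply i)
  have hB : MeasurableSet (WithLp.toLp 2 ⁻¹' closedBall (0 : EuclideanSpace ℝ ι) ρ) :=
    measurableSet_closedBall.preimage (PiLp.continuous_toLp 2 _).measurable
  have hset : {x : EuclideanSpace ℝ ι | ‖WithLp.toLp 2 fun i => overshoot (l i) (x i)‖ ≤ ρ} =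
      WithLp.ofLp ⁻¹' (Φ ⁻¹' (WithLp.toLp 2 ⁻¹' closedBall 0 ρ)) := by
    ext x; simp [Φ]
  rw [hset, (PiLp.volume_preserving_ofLp _).measure_preimage (hB.preimage hΦ).nullMeasurableSet,
    ← map_apply hΦ hB, map_pi_overshoot_volume hl, Measure.pi_add_smul, Measure.coe_finsetSum,
    Finset.sum_apply]
  refine Finset.sum_congr rfl fun T _ => ?_
  rw [Measure.smul_apply, smul_eq_mul,
    pi_volume_ite_dirac_zero_closedBall _ (k := T.card) (by simp) hρ]
  rfl

end Euclidean

lemma sum_prod_compl_mul_card {ι R : Type*} [Fintype ι] [DecidableEq ι] [CommSemiring R]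
    (a : ι → R) (g : ℕ → R) :
    ∑ T : Finset ι, (∏ i ∈ Tᶜ, a i) * g T.card =
      ∑ k ∈ Finset.range (Fintype.card ι + 1),
        (∑ t ∈ Finset.univ.powersetCard (Fintype.card ι - k), ∏ i ∈ t, a i) * g k := by
  rw [← Finset.powerset_univ, Finset.sum_powerset, Finset.card_univ]
  refine Finset.sum_congr rfl fun k hk => ?_
  rw [Finset.sum_mul]
  refine Finset.sum_nbij' (·ᶜ) (·ᶜ) ?_ ?_ (fun T _ => compl_compl T) (fun T _ => compl_compl T) ?_
  · intro T hT
    simp only [Finset.mem_powersetCard_univ] at hT ⊢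
    rw [Finset.card_compl, hT]
  · intro T hT
    simp only [Finset.mem_powersetCard_univ] at hT ⊢
    rw [Finset.card_compl, hT]
    have := Finset.mem_range.mp hk
    omega
  · intro T hT
    simp only [Finset.mem_powersetCard_univ] at hT
    rw [hT]

theorem box_steiner_formula_general (n : ℕ)
    (l : Fin n → ℝ) (hl : ∀ i, 0 < l i) (ρ : ℝ) (hρ : 0 ≤ ρ) :
    volume {x : EuclideanSpace ℝ (Fin n) |
        Metric.infDist x {y : EuclideanSpace ℝ (Fin n) | ∀ i, 0 ≤ y i ∧ y i ≤ l i} ≤ ρ}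
      = ∑ k ∈ Finset.range (n + 1),
          volume (Metric.closedBall (0 : EuclideanSpace ℝ (Fin k)) 1)
            * ENNReal.ofReal
                ((∑ t ∈ Finset.univ.powersetCard (n - k), ∏ i ∈ t, l i) * ρ ^ k) := by
  simp only [infDist_box_eq_norm_overshoot fun i => (hl i).le]
  rw [volume_setOf_norm_overshoot_le (fun i => (hl i).le) hρ,
    sum_prod_compl_mul_card (fun i => ENNReal.ofReal (l i))
      fun k => ENNReal.ofReal (ρ ^ k) * volume (closedBall (0 : EuclideanSpace ℝ (Fin k)) 1),
    Fintype.card_fin]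
  refine Finset.sum_congr rfl fun k _ => ?_
  have hprod (t : Finset (Fin n)) : 0 ≤ ∏ i ∈ t, l i := Finset.prod_nonneg fun i _ => (hl i).le
  rw [ENNReal.ofReal_mul (Finset.sum_nonneg fun t _ => hprod t),
    ENNReal.ofReal_sum_of_nonneg fun t _ => hprod t]
  simp only [ENNReal.ofReal_prod_of_nonneg fun i _ => (hl i).le]
  ring

/-- Steiner formula for a rectangular parallelepiped `P = ∏ i, [0, l i]`:
`vol(P_ρ) = ∑_{k=0}^n κ_k s_{n-k}(l) ρ^k`, where `κ_k` is the volume of the unit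
ball in `ℝ^k` and `s_j` the `j`-th elementary symmetric polynomial. -/
theorem box_steiner_formula (n : ℕ) (hn : 1 ≤ n)
    (l : Fin n → ℝ) (hl : ∀ i, 0 < l i) (ρ : ℝ) (hρ : 0 ≤ ρ) :
    volume {x : EuclideanSpace ℝ (Fin n) |
        Metric.infDist x {y : EuclideanSpace ℝ (Fin n) | ∀ i, 0 ≤ y i ∧ y i ≤ l i} ≤ ρ}
      = ∑ k ∈ Finset.range (n + 1),
          volume (Metric.closedBall (0 : EuclideanSpace ℝ (Fin k)) 1)
            * ENNReal.ofReal
                ((∑ t ∈ Finset.univ.powersetCard (n - k), ∏ i ∈ t, l i) * ρ ^ k) :=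
  box_steiner_formula_general n l hl ρ hρ
end

section
/- Let n ≥ 1, let a₁, …, aₙ > 0, let E = {x ∈ ℝⁿ : Σᵢ xᵢ²/aᵢ² ≤ 1}, and let 0 ≤ ρ ≤ min_i aᵢ/√n. Then the volume of the ρ-neighborhood of the boundary ∂E satisfies vol({x ∈ ℝⁿ : dist(x, ∂E) ≤ ρ}) ≤ 2ⁿ · [∏ᵢ (aᵢ + ρ) − ∏ᵢ (aᵢ/√n − ρ)]. -/
/-!
A point within distance `ρ` of `∂E` is within `ρ`, coordinatewise, of a point `y` with
`∑ yᵢ² / aᵢ² = 1`. Every `|yᵢ| ≤ aᵢ`, and by pigeonhole some term `yᵢ² / aᵢ²` is at least `1 / n`,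
i.e. `|yᵢ| ≥ aᵢ / √n`. So the neighborhood lies in the box `∏ [-(aᵢ + ρ), aᵢ + ρ]` minus the open
box `∏ (-(aᵢ / √n - ρ), aᵢ / √n - ρ)`, and the bound is the volume of this difference.
-/

open MeasureTheory Set Metric

section Box

variable {ι : Type*} [Fintype ι]

theorem EuclideanSpace.volume_setOf_forall_mem (s : ι → Set ℝ) :
    volume {x : EuclideanSpace ℝ ι | ∀ i, x i ∈ s i} = ∏ i, volume (s i) := by
  rw [← volume_pi_pi]
  convert (EuclideanSpace.volume_preserving_symm_measurableEquiv_toLp ι).measure_preimage_equiv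
    (univ.pi s) using 2
  ext x
  simp

theorem EuclideanSpace.volume_setOf_forall_abs_le_s14 (c : ι → ℝ) (hc : ∀ i, 0 ≤ c i) :
    volume {x : EuclideanSpace ℝ ι | ∀ i, |x i| ≤ c i} = ENNReal.ofReal (∏ i, 2 * c i) := by
  simp_rw [abs_le, ← mem_Icc, volume_setOf_forall_mem, Real.volume_Icc]
  rw [ENNReal.ofReal_prod_of_nonneg fun i _ => by linarith [hc i]]
  congr! 2; ring

theorem EuclideanSpace.volume_setOf_forall_abs_lt (c : ι → ℝ) (hc : ∀ i, 0 ≤ c i) :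
    volume {x : EuclideanSpace ℝ ι | ∀ i, |x i| < c i} = ENNReal.ofReal (∏ i, 2 * c i) := by
  simp_rw [abs_lt, ← mem_Ioo, volume_setOf_forall_mem, Real.volume_Ioo]
  rw [ENNReal.ofReal_prod_of_nonneg fun i _ => by linarith [hc i]]
  congr! 2; ring

theorem EuclideanSpace.volume_setOf_forall_abs_le_diff_setOf_forall_abs_lt (b c : ι → ℝ) (hb : ∀ i, 0 ≤ b i)
    (hbc : ∀ i, b i ≤ c i) :
    volume ({x : EuclideanSpace ℝ ι | ∀ i, |x i| ≤ c i} \ {x | ∀ i, |x i| < b i}) =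
      ENNReal.ofReal (2 ^ Fintype.card ι * (∏ i, c i - ∏ i, b i)) := by
  have hsub : {x : EuclideanSpace ℝ ι | ∀ i, |x i| < b i} ⊆ {x | ∀ i, |x i| ≤ c i} :=
    fun x hx i => (hx i).le.trans (hbc i)
  have hmeas : MeasurableSet {x : EuclideanSpace ℝ ι | ∀ i, |x i| < b i} := by
    simp only [ofPred_forall]
    exact MeasurableSet.iInter fun i => measurableSet_lt (by fun_prop) measurable_const
  rw [measure_sdiff hsub hmeas.nullMeasurableSet (by simp [volume_setOf_forall_abs_lt b hb]),
    volume_setOf_forall_abs_le_s14 c fun i => (hb i).trans (hbc i), volume_setOf_forall_abs_lt b hb,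
    ← ENNReal.ofReal_sub _ (Finset.prod_nonneg fun i _ => by linarith [hb i]),
    Finset.prod_mul_distrib, Finset.prod_mul_distrib, Finset.prod_const, Finset.card_univ, mul_sub]

end Box

section Ellipsoid

variable {ι : Type*} [Fintype ι] {a : ι → ℝ}

def ellipsoid (a : ι → ℝ) : Set (EuclideanSpace ℝ ι) := {y | ∑ i, y i ^ 2 / a i ^ 2 ≤ 1}

theorem continuous_sum_sq_div_sq (a : ι → ℝ) :
    Continuous fun y : EuclideanSpace ℝ ι => ∑ i, y i ^ 2 / a i ^ 2 := by
  fun_prop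

theorem isClosed_ellipsoid (a : ι → ℝ) : IsClosed (ellipsoid a) :=
  isClosed_le (continuous_sum_sq_div_sq a) continuous_const

theorem frontier_ellipsoid_subset (a : ι → ℝ) :
    frontier (ellipsoid a) ⊆ {y | ∑ i, y i ^ 2 / a i ^ 2 = 1} :=
  frontier_le_subset_eq (continuous_sum_sq_div_sq a) continuous_const

theorem abs_apply_le_of_mem_ellipsoid (ha : ∀ i, 0 < a i) {y : EuclideanSpace ℝ ι}
    (hy : y ∈ ellipsoid a) (i : ι) : |y i| ≤ a i := by
  have hterm : y i ^ 2 / a i ^ 2 ≤ 1 :=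
    (Finset.single_le_sum (f := fun j => y j ^ 2 / a j ^ 2) (fun j _ => by positivity)
      (Finset.mem_univ i)).trans hy
  rw [div_le_one (pow_pos (ha i) 2)] at hterm
  exact abs_le_of_sq_le_sq hterm (ha i).le

theorem isCompact_ellipsoid (ha : ∀ i, 0 < a i) : IsCompact (ellipsoid a) := by
  refine (isCompact_closedBall 0 √(∑ i, a i ^ 2)).of_isClosed_subset (isClosed_ellipsoid a)
    fun y hy => ?_
  rw [mem_closedBall_zero_iff, EuclideanSpace.norm_eq]
  gcongr with i
  exact abs_apply_le_of_mem_ellipsoid ha hy i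

theorem frontier_ellipsoid_nonempty [Nonempty ι] (ha : ∀ i, 0 < a i) :
    (frontier (ellipsoid a)).Nonempty := by
  refine nonempty_frontier_iff.2 ⟨⟨0, by simp [ellipsoid]⟩, fun h => ?_⟩
  obtain ⟨i⟩ := ‹Nonempty ι›
  have := abs_apply_le_of_mem_ellipsoid ha (h ▸ mem_univ (WithLp.toLp 2 fun j => 2 * a j)) i
  simp only [abs_of_pos (mul_pos two_pos (ha i))] at this
  linarith [ha i]

theorem exists_le_abs_apply_of_mem_frontier_ellipsoid [Nonempty ι] (ha : ∀ i, 0 < a i)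
    {y : EuclideanSpace ℝ ι} (hy : y ∈ frontier (ellipsoid a)) :
    ∃ i, a i / √(Fintype.card ι) ≤ |y i| := by
  have hsum : ∑ _i : ι, (1 / Fintype.card ι : ℝ) ≤ ∑ i, y i ^ 2 / a i ^ 2 := by
    rw [show ∑ i, y i ^ 2 / a i ^ 2 = 1 from frontier_ellipsoid_subset a hy]
    simp
  obtain ⟨i, -, hi⟩ := Finset.exists_le_of_sum_le Finset.univ_nonempty hsum
  rw [le_div_iff₀ (pow_pos (ha i) 2)] at hi
  refine ⟨i, ?_⟩
  calc a i / √(Fintype.card ι) = √(a i ^ 2 / Fintype.card ι) := by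
        rw [Real.sqrt_div' _ (Nat.cast_nonneg _), Real.sqrt_sq (ha i).le]
    _ ≤ √(y i ^ 2) := Real.sqrt_le_sqrt (by rwa [div_eq_inv_mul, ← one_div])
    _ = |y i| := Real.sqrt_sq_eq_abs _

theorem setOf_infDist_frontier_ellipsoid_le_subset [Nonempty ι] (ha : ∀ i, 0 < a i) (ρ : ℝ) :
    {x | infDist x (frontier (ellipsoid a)) ≤ ρ} ⊆
      {x | ∀ i, |x i| ≤ a i + ρ} \ {x | ∀ i, |x i| < a i / √(Fintype.card ι) - ρ} := by
  intro x hx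
  have hcompact : IsCompact (frontier (ellipsoid a)) :=
    (isCompact_ellipsoid ha).of_isClosed_subset isClosed_frontier
      (isClosed_ellipsoid a).frontier_subset
  obtain ⟨y, hy, hxy⟩ := hcompact.exists_infDist_eq_dist (frontier_ellipsoid_nonempty ha) x
  have hcoord (i : ι) : |x i - y i| ≤ ρ := by
    rw [← Real.dist_eq]
    exact (PiLp.dist_apply_le x y i).trans (hxy ▸ hx)
  have hyE : y ∈ ellipsoid a := (isClosed_ellipsoid a).frontier_subset hy
  refine ⟨fun i => ?_, fun hlt => ?_⟩
  · linarith [abs_sub_abs_le_abs_sub (x i) (y i), hcoord i, abs_apply_le_of_mem_ellipsoid ha hyE i]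
  · obtain ⟨i, hi⟩ := exists_le_abs_apply_of_mem_frontier_ellipsoid ha hy
    linarith [abs_sub_abs_le_abs_sub (y i) (x i), abs_sub_comm (x i) (y i), hcoord i, hlt i]

end Ellipsoid

/-- For `0 ≤ ρ ≤ min_i a i / √n`, the volume of the closed `ρ`-neighborhood of the
boundary of the ellipsoid is at most `2^n (∏ i, (a i + ρ) - ∏ i, (a i / √n - ρ))`. -/
theorem ellipsoid_boundary_neighborhood_volume (n : ℕ) (hn : 1 ≤ n)
    (a : Fin n → ℝ) (ha : ∀ i, 0 < a i) (ρ : ℝ) (hρ : 0 ≤ ρ)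
    (hρ' : ∀ i, ρ ≤ a i / Real.sqrt n) :
    volume {x : EuclideanSpace ℝ (Fin n) |
        Metric.infDist x
          (frontier {y : EuclideanSpace ℝ (Fin n) | ∑ i, (y i) ^ 2 / (a i) ^ 2 ≤ 1}) ≤ ρ}
      ≤ ENNReal.ofReal
          ((2 : ℝ) ^ n * (∏ i, (a i + ρ) - ∏ i, (a i / Real.sqrt n - ρ))) := by
  have : Nonempty (Fin n) := ⟨⟨0, hn⟩⟩
  have hsub := setOf_infDist_frontier_ellipsoid_le_subset ha ρ
  rw [Fintype.card_fin] at hsub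
  have hshrink (i : Fin n) : a i / √n ≤ a i :=
    div_le_self (ha i).le (Real.one_le_sqrt.2 (Nat.one_le_cast.2 hn))
  refine (measure_mono hsub).trans_eq ?_
  rw [EuclideanSpace.volume_setOf_forall_abs_le_diff_setOf_forall_abs_lt _ _
    (fun i => sub_nonneg.2 (hρ' i)) (fun i => by linarith [hshrink i]), Fintype.card_fin]
end
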